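/- Let x_t := φ^t(x₀) be an orbit in K. If ν : ℝ → E* is differentiable, bounded, and satisfies the homogeneous adjoint ODE d/dt ν_t = −ν_t ∘ DF(x_t) for all t ∈ ℝ, then ν_t ∘ P^s(x_t) = 0 and ν_t ∘ P^u(x_t) = 0 for all t; consequently ν_t = c · ε^c(x_t) for all t, where the constant c = ν_t(F(x_t)) is independent of t. (A bounded homogeneous adjoint solution along an orbit lies in the one-dimensional center adjoint direction.) -/

import Mathlib

open Function Set Filter MeasureTheory Topology

/-!
Write `xₜ = φ t x₀`. Since `ν` solves the adjoint of the variational equation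
`Ẇ = DF(xₜ) W`, the pairing `ν_{s+t} (Dφᵗ(x_s) v)` does not depend on `t`. For `v` stable,
`Dφᵗ(x_s) v` decays as `t → ∞` while `ν` stays bounded, so `ν_s v = 0`; for `v` unstable, run
time backwards. Hence `ν_s` vanishes on `Vˢ ⊕ Vᵘ` and is a multiple of `εᶜ(x_s)`, namely
`ν_s(F(x_s)) • εᶜ(x_s)`; this coefficient is constant because `Dφᵗ(x₀) F(x₀) = F(xₜ)`.
-/

theorem comp_eq_of_hasDerivAt_adjoint {E H G : Type*} [NormedAddCommGroup E] [NormedSpace ℝ E]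
    [NormedAddCommGroup H] [NormedSpace ℝ H] [NormedAddCommGroup G] [NormedSpace ℝ G]
    {ν : ℝ → E →L[ℝ] G} {W : ℝ → H →L[ℝ] E} {A : ℝ → E →L[ℝ] E}
    (hν : ∀ t, HasDerivAt ν (-(ν t).comp (A t)) t)
    (hW : ∀ t, HasDerivAt W ((A t).comp (W t)) t) (s t : ℝ) :
    (ν t).comp (W t) = (ν s).comp (W s) := by
  have hzero : ∀ t, HasDerivAt (fun r => (ν r).comp (W r)) 0 t := fun t =>
    ((hν t).clm_comp (hW t)).congr_deriv (by
      rw [ContinuousLinearMap.neg_comp, ContinuousLinearMap.comp_assoc, neg_add_cancel])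
  exact is_const_of_deriv_eq_zero (fun t => (hzero t).differentiableAt)
    (fun t => (hzero t).deriv) t s

theorem eq_zero_of_apply_eq_of_norm_le_rpow {E G : Type*} [NormedAddCommGroup E]
    [NormedSpace ℝ E] [NormedAddCommGroup G] [NormedSpace ℝ G] {ℓ : ℝ → E →L[ℝ] G} {w : ℝ → E}
    {a : G} {M C lam b : ℝ} (hlam0 : 0 < lam) (hlam1 : lam < 1) (hℓ : ∀ t, ‖ℓ t‖ ≤ M)
    (hw : ∀ t, 0 ≤ t → ‖w t‖ ≤ C * lam ^ t * b) (ha : ∀ t, 0 ≤ t → ℓ t (w t) = a) : a = 0 := by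
  have hlim : Tendsto (fun t : ℝ => M * (C * lam ^ t * b)) atTop (𝓝 0) := by
    simpa using (((tendsto_rpow_atTop_of_base_lt_one lam (by linarith) hlam1).const_mul C).mul_const
      b).const_mul M
  refine norm_le_zero_iff.mp (ge_of_tendsto hlim (eventually_atTop.2 ⟨0, fun t ht => ?_⟩))
  rw [← ha t ht]
  exact (ℓ t).le_of_opNorm_le_of_le (hℓ t) (hw t ht)

theorem ContinuousLinearMap.eq_apply_smul_of_sup_span_eq_top {𝕜 E : Type*}
    [NontriviallyNormedField 𝕜] [NormedAddCommGroup E] [NormedSpace 𝕜 E] {W : Submodule 𝕜 E}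
    {f : E} (hW : W ⊔ 𝕜 ∙ f = ⊤) {ν ε : E →L[𝕜] 𝕜} (hν : W ≤ LinearMap.ker (ν : E →ₗ[𝕜] 𝕜))
    (hε : W ≤ LinearMap.ker (ε : E →ₗ[𝕜] 𝕜)) (hεf : ε f = 1) : ν = ν f • ε := by
  have hker : W ⊔ 𝕜 ∙ f ≤ LinearMap.ker ((ν - ν f • ε : E →L[𝕜] 𝕜) : E →ₗ[𝕜] 𝕜) :=
    sup_le (fun w hw => by simp [LinearMap.mem_ker.1 (hν hw), LinearMap.mem_ker.1 (hε hw)])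
      ((Submodule.span_singleton_le_iff_mem _ _).2 (by simp [hεf]))
  ext v
  simpa [sub_eq_zero] using LinearMap.mem_ker.1 (hker (hW ▸ Submodule.mem_top : v ∈ _))

section Flow

variable {E : Type*} [NormedAddCommGroup E] [NormedSpace ℝ E] {F : E → E} {φ : ℝ → E → E}

theorem continuous_orbit (hφode : ∀ x t, HasDerivAt (fun s => φ s x) (F (φ t x)) t) (x : E) :
    Continuous fun s => φ s x :=
  continuous_iff_continuousAt.2 fun t => (hφode x t).continuousAt

theorem flow_eq_add_integral [CompleteSpace E] (hF : Continuous F) (hφ0 : ∀ x, φ 0 x = x)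
    (hφode : ∀ x t, HasDerivAt (fun s => φ s x) (F (φ t x)) t) (x : E) (r : ℝ) :
    φ r x = x + ∫ u in (0 : ℝ)..r, F (φ u x) := by
  rw [intervalIntegral.integral_eq_sub_of_hasDerivAt (fun u _ => hφode x u)
    ((hF.comp (continuous_orbit hφode x)).intervalIntegrable 0 r), hφ0, add_sub_cancel]

theorem exists_bound_fderiv_comp_fderiv_flow [ProperSpace E] (hF : Continuous (fderiv ℝ F))
    (hφode : ∀ x t, HasDerivAt (fun s => φ s x) (F (φ t x)) t)
    (hφdiff : ∀ t, Differentiable ℝ (φ t))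
    (hφD : Continuous fun p : ℝ × E => fderiv ℝ (φ p.1) p.2) (x : E) (r : ℝ) :
    ∃ B, ∀ u ∈ uIcc 0 r, ∀ z ∈ Metric.closedBall x 1,
      ‖(fderiv ℝ F (φ u z)).comp (fderiv ℝ (φ u) z)‖ ≤ B := by
  obtain ⟨M, hM⟩ := ((isCompact_uIcc (a := (0 : ℝ)) (b := r)).prod
    (isCompact_closedBall x 1)).exists_bound_of_continuousOn hφD.continuousOn
  have hM0 : 0 ≤ M :=
    (norm_nonneg _).trans (hM (0, x) ⟨left_mem_uIcc, Metric.mem_closedBall_self zero_le_one⟩)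
  obtain ⟨R, hR⟩ := (isCompact_uIcc (a := (0 : ℝ)) (b := r)).exists_bound_of_continuousOn
    (continuous_orbit hφode x).continuousOn
  have hmem : ∀ u ∈ uIcc 0 r, ∀ z ∈ Metric.closedBall x 1,
      φ u z ∈ Metric.closedBall (0 : E) (R + M) := by
    intro u hu z hz
    have hlip : ‖φ u z - φ u x‖ ≤ M * ‖z - x‖ :=
      (convex_closedBall x 1).norm_image_sub_le_of_norm_fderiv_le (fun w _ => hφdiff u w)
        (fun w hw => hM (u, w) ⟨hu, hw⟩) (Metric.mem_closedBall_self zero_le_one) hz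
    have hzx : ‖z - x‖ ≤ 1 := mem_closedBall_iff_norm.mp hz
    rw [mem_closedBall_zero_iff]
    calc ‖φ u z‖ ≤ ‖φ u x‖ + ‖φ u z - φ u x‖ := norm_le_norm_add_norm_sub' _ _
      _ ≤ R + M * 1 := add_le_add (hR u hu) (hlip.trans (by gcongr))
      _ = R + M := by rw [mul_one]
  obtain ⟨L, hL⟩ := (isCompact_closedBall (0 : E) (R + M)).exists_bound_of_continuousOn
    hF.continuousOn
  exact ⟨L * M, fun u hu z hz => (ContinuousLinearMap.opNorm_comp_le _ _).trans <|
    mul_le_mul (hL _ (hmem u hu z hz)) (hM (u, z) ⟨hu, hz⟩) (norm_nonneg _)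
      ((norm_nonneg _).trans (hL _ (hmem u hu z hz)))⟩

theorem hasFDerivAt_flow [ProperSpace E] (hF : ContDiff ℝ 1 F) (hφ0 : ∀ x, φ 0 x = x)
    (hφode : ∀ x t, HasDerivAt (fun s => φ s x) (F (φ t x)) t)
    (hφdiff : ∀ t, Differentiable ℝ (φ t))
    (hφD : Continuous fun p : ℝ × E => fderiv ℝ (φ p.1) p.2) (x : E) (r : ℝ) :
    HasFDerivAt (φ r) (ContinuousLinearMap.id ℝ E +
      ∫ u in (0 : ℝ)..r, (fderiv ℝ F (φ u x)).comp (fderiv ℝ (φ u) x)) x := by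
  have hFc : Continuous F := hF.continuous
  have hDF : Continuous (fderiv ℝ F) := hF.continuous_fderiv one_ne_zero
  have horbit := continuous_orbit hφode
  obtain ⟨B, hB⟩ := exists_bound_fderiv_comp_fderiv_flow hDF hφode hφdiff hφD x r
  have hint := intervalIntegral.hasFDerivAt_integral_of_dominated_of_fderiv_le
    (F := fun z u => F (φ u z)) (F' := fun z u => (fderiv ℝ F (φ u z)).comp (fderiv ℝ (φ u) z))
    (μ := volume) (bound := fun _ => B) (Metric.closedBall_mem_nhds x one_pos)
    (Eventually.of_forall fun z => (hFc.comp (horbit z)).aestronglyMeasurable)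
    ((hFc.comp (horbit x)).intervalIntegrable 0 r)
    ((hDF.comp (horbit x)).clm_comp (hφD.comp (continuous_id.prodMk continuous_const))
      |>.aestronglyMeasurable)
    (Eventually.of_forall fun u hu z hz => hB u (uIoc_subset_uIcc hu) z hz)
    intervalIntegrable_const
    (Eventually.of_forall fun u _ z _ =>
      (hF.differentiable one_ne_zero _).hasFDerivAt.comp z (hφdiff u z).hasFDerivAt)
  rw [show φ r = fun z => z + ∫ u in (0 : ℝ)..r, F (φ u z) from
    funext fun z => flow_eq_add_integral hFc hφ0 hφode z r]
  exact (hasFDerivAt_id x).add hint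

theorem hasDerivAt_fderiv_flow [ProperSpace E] (hF : ContDiff ℝ 1 F) (hφ0 : ∀ x, φ 0 x = x)
    (hφode : ∀ x t, HasDerivAt (fun s => φ s x) (F (φ t x)) t)
    (hφdiff : ∀ t, Differentiable ℝ (φ t))
    (hφD : Continuous fun p : ℝ × E => fderiv ℝ (φ p.1) p.2) (x : E) (t : ℝ) :
    HasDerivAt (fun r => fderiv ℝ (φ r) x)
      ((fderiv ℝ F (φ t x)).comp (fderiv ℝ (φ t) x)) t := by
  have hA : Continuous fun u => (fderiv ℝ F (φ u x)).comp (fderiv ℝ (φ u) x) :=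
    ((hF.continuous_fderiv one_ne_zero).comp (continuous_orbit hφode x)).clm_comp
      (hφD.comp (continuous_id.prodMk continuous_const))
  rw [funext fun r => (hasFDerivAt_flow hF hφ0 hφode hφdiff hφD x r).fderiv]
  exact ((hasDerivAt_const t (ContinuousLinearMap.id ℝ E)).add
    (intervalIntegral.integral_hasDerivAt_right (hA.intervalIntegrable 0 t)
      (hA.stronglyMeasurableAtFilter _ _) hA.continuousAt)).congr_deriv (zero_add _)

theorem fderiv_flow_apply_vectorField (hφ0 : ∀ x, φ 0 x = x)
    (hφadd : ∀ s t x, φ (s + t) x = φ s (φ t x))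
    (hφode : ∀ x t, HasDerivAt (fun s => φ s x) (F (φ t x)) t)
    (hφdiff : ∀ t, Differentiable ℝ (φ t)) (t : ℝ) (x : E) :
    fderiv ℝ (φ t) x (F x) = F (φ t x) := by
  have hchain : HasDerivAt (fun s => φ t (φ s x)) (fderiv ℝ (φ t) x (F x)) 0 := by
    have horbit : HasDerivAt (fun s => φ s x) (F x) 0 := by simpa [hφ0] using hφode x 0
    have hφt : HasFDerivAt (φ t) (fderiv ℝ (φ t) x) (φ 0 x) := by
      rw [hφ0]; exact (hφdiff t x).hasFDerivAt
    exact hφt.comp_hasDerivAt 0 horbit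
  have hshift : HasDerivAt (fun s => φ t (φ s x)) (F (φ t x)) 0 := by
    simp_rw [← hφadd]
    simpa using (hφode x (t + 0)).comp_const_add t 0
  exact hchain.unique hshift

theorem adjoint_comp_fderiv_flow [ProperSpace E] {G : Type*} [NormedAddCommGroup G]
    [NormedSpace ℝ G] (hF : ContDiff ℝ 1 F) (hφ0 : ∀ x, φ 0 x = x)
    (hφadd : ∀ s t x, φ (s + t) x = φ s (φ t x))
    (hφode : ∀ x t, HasDerivAt (fun s => φ s x) (F (φ t x)) t)
    (hφdiff : ∀ t, Differentiable ℝ (φ t))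
    (hφD : Continuous fun p : ℝ × E => fderiv ℝ (φ p.1) p.2) {ν : ℝ → E →L[ℝ] G} {x : E}
    (hν : ∀ t, HasDerivAt ν (-(ν t).comp (fderiv ℝ F (φ t x))) t) (s t : ℝ) :
    (ν (s + t)).comp (fderiv ℝ (φ t) (φ s x)) = ν s := by
  have hshift : ∀ r, HasDerivAt (fun r => ν (s + r))
      (-(ν (s + r)).comp (fderiv ℝ F (φ r (φ s x)))) r := fun r => by
    rw [← hφadd, add_comm r s]
    exact (hν (s + r)).comp_const_add s r
  have hfderiv0 : fderiv ℝ (φ 0) (φ s x) = ContinuousLinearMap.id ℝ E := by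
    rw [show φ 0 = id from funext hφ0, fderiv_id]
  simpa [hfderiv0] using comp_eq_of_hasDerivAt_adjoint hshift
    (hasDerivAt_fderiv_flow hF hφ0 hφode hφdiff hφD (φ s x)) 0 t

end Flow

theorem bounded_homogeneous_adjoint_center_flow_general
    {E : Type*} [NormedAddCommGroup E] [NormedSpace ℝ E] [FiniteDimensional ℝ E]
    (F : E → E) (hF : ContDiff ℝ 2 F)
    (φ : ℝ → E → E)
    (hφ0 : ∀ x : E, φ 0 x = x)
    (hφadd : ∀ (s t : ℝ) (x : E), φ (s + t) x = φ s (φ t x))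
    (hφode : ∀ (x : E) (t : ℝ), HasDerivAt (fun s => φ s x) (F (φ t x)) t)
    (hφC1 : ∀ t : ℝ, ContDiff ℝ 1 (φ t))
    (hφD : Continuous fun p : ℝ × E => fderiv ℝ (φ p.1) p.2)
    (K : Set E) (hφK : ∀ t : ℝ, φ t '' K = K)
    (Vs Vu Vc : E → Submodule ℝ E)
    (hVc : ∀ x ∈ K, Vc x = Submodule.span ℝ {F x})
    (C lam : ℝ) (hlam0 : 0 < lam) (hlam1 : lam < 1)
    (hyps : ∀ t : ℝ, 0 ≤ t → ∀ x ∈ K, ∀ v ∈ Vs x, ‖fderiv ℝ (φ t) x v‖ ≤ C * lam ^ t * ‖v‖)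
    (hypu : ∀ t : ℝ, 0 ≤ t → ∀ x ∈ K, ∀ v ∈ Vu x, ‖fderiv ℝ (φ (-t)) x v‖ ≤ C * lam ^ t * ‖v‖)
    (Ps Pu Pc : E → E →L[ℝ] E)
    (hproj : ∀ x ∈ K, ∀ v : E, Ps x v ∈ Vs x ∧ Pu x v ∈ Vu x ∧ Pc x v ∈ Vc x ∧
      Ps x v + Pu x v + Pc x v = v)
    (εc : E → E →L[ℝ] ℝ)
    (hεc : ∀ x ∈ K, (∀ v ∈ Vs x, εc x v = 0) ∧ (∀ v ∈ Vu x, εc x v = 0) ∧ εc x (F x) = 1)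
    (x₀ : E) (hx₀ : x₀ ∈ K)
    (ν : ℝ → E →L[ℝ] ℝ) (hνb : ∃ M : ℝ, ∀ t : ℝ, ‖ν t‖ ≤ M)
    (hode : ∀ t : ℝ, HasDerivAt ν (-(ν t).comp (fderiv ℝ F (φ t x₀))) t) :
    (∀ t : ℝ, (ν t).comp (Ps (φ t x₀)) = 0 ∧ (ν t).comp (Pu (φ t x₀)) = 0) ∧
    ∃ c : ℝ, (∀ t : ℝ, ν t = c • εc (φ t x₀)) ∧ ∀ t : ℝ, ν t (F (φ t x₀)) = c := by
  have hφdiff : ∀ t, Differentiable ℝ (φ t) := fun t => (hφC1 t).differentiable one_ne_zero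
  have hpair := adjoint_comp_fderiv_flow (hF.of_le one_le_two) hφ0 hφadd hφode hφdiff hφD hode
  have horbK : ∀ t, φ t x₀ ∈ K := fun t => hφK t ▸ mem_image_of_mem (φ t) hx₀
  obtain ⟨M, hM⟩ := hνb
  have hs : ∀ s, Vs (φ s x₀) ≤ LinearMap.ker (ν s : E →ₗ[ℝ] ℝ) := fun s v hv =>
    eq_zero_of_apply_eq_of_norm_le_rpow hlam0 hlam1 (fun t => hM (s + t))
      (fun t ht => hyps t ht _ (horbK s) v hv) (fun t _ => congr($(hpair s t) v))
  have hu : ∀ s, Vu (φ s x₀) ≤ LinearMap.ker (ν s : E →ₗ[ℝ] ℝ) := fun s v hv =>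
    eq_zero_of_apply_eq_of_norm_le_rpow hlam0 hlam1 (fun t => hM (s + -t))
      (fun t ht => hypu t ht _ (horbK s) v hv) (fun t _ => congr($(hpair s (-t)) v))
  have hc : ∀ t, ν t (F (φ t x₀)) = ν 0 (F x₀) := fun t => by
    simpa [hφ0, fderiv_flow_apply_vectorField hφ0 hφadd hφode hφdiff] using
      congr($(hpair 0 t) (F x₀))
  have hspan : ∀ t, Vs (φ t x₀) ⊔ Vu (φ t x₀) ⊔ ℝ ∙ F (φ t x₀) = ⊤ := fun t =>
    eq_top_iff.2 fun v _ => by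
      obtain ⟨hvs, hvu, hvc, hsum⟩ := hproj _ (horbK t) v
      rw [hVc _ (horbK t)] at hvc
      exact hsum ▸ add_mem (add_mem (Submodule.mem_sup_left (Submodule.mem_sup_left hvs))
        (Submodule.mem_sup_left (Submodule.mem_sup_right hvu))) (Submodule.mem_sup_right hvc)
  refine ⟨fun t => ⟨?_, ?_⟩, ν 0 (F x₀), fun t => ?_, hc⟩
  · ext v; exact hs t (hproj _ (horbK t) v).1
  · ext v; exact hu t (hproj _ (horbK t) v).2.1
  · obtain ⟨hεs, hεu, hεF⟩ := hεc _ (horbK t)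
    rw [← hc t]
    exact ContinuousLinearMap.eq_apply_smul_of_sup_span_eq_top (hspan t) (sup_le (hs t) (hu t))
      (sup_le hεs hεu) hεF

theorem bounded_homogeneous_adjoint_center_flow
    {E : Type*} [NormedAddCommGroup E] [NormedSpace ℝ E] [FiniteDimensional ℝ E]
    (F : E → E) (hF : ContDiff ℝ 2 F)
    (φ : ℝ → E → E)
    (hφ0 : ∀ x : E, φ 0 x = x)
    (hφadd : ∀ (s t : ℝ) (x : E), φ (s + t) x = φ s (φ t x))
    (hφode : ∀ (x : E) (t : ℝ), HasDerivAt (fun s => φ s x) (F (φ t x)) t)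
    (hφC1 : ∀ t : ℝ, ContDiff ℝ 1 (φ t))
    (hφD : Continuous fun p : ℝ × E => fderiv ℝ (φ p.1) p.2)
    (K : Set E) (hKc : IsCompact K) (hφK : ∀ t : ℝ, φ t '' K = K)
    (hFne : ∀ x ∈ K, F x ≠ 0)
    (Vs Vu Vc : E → Submodule ℝ E)
    (hVc : ∀ x ∈ K, Vc x = Submodule.span ℝ {F x})
    (hequivs : ∀ (t : ℝ), ∀ x ∈ K, (Vs x).map (fderiv ℝ (φ t) x : E →ₗ[ℝ] E) = Vs (φ t x))
    (hequivu : ∀ (t : ℝ), ∀ x ∈ K, (Vu x).map (fderiv ℝ (φ t) x : E →ₗ[ℝ] E) = Vu (φ t x))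
    (hequivc : ∀ (t : ℝ), ∀ x ∈ K, (Vc x).map (fderiv ℝ (φ t) x : E →ₗ[ℝ] E) = Vc (φ t x))
    (C lam : ℝ) (hC : 0 < C) (hlam0 : 0 < lam) (hlam1 : lam < 1)
    (hyps : ∀ t : ℝ, 0 ≤ t → ∀ x ∈ K, ∀ v ∈ Vs x, ‖fderiv ℝ (φ t) x v‖ ≤ C * lam ^ t * ‖v‖)
    (hypu : ∀ t : ℝ, 0 ≤ t → ∀ x ∈ K, ∀ v ∈ Vu x, ‖fderiv ℝ (φ (-t)) x v‖ ≤ C * lam ^ t * ‖v‖)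
    (Ps Pu Pc : E → E →L[ℝ] E)
    (hproj : ∀ x ∈ K, ∀ v : E, Ps x v ∈ Vs x ∧ Pu x v ∈ Vu x ∧ Pc x v ∈ Vc x ∧
      Ps x v + Pu x v + Pc x v = v)
    (hdirect : ∀ x ∈ K, ∀ vs ∈ Vs x, ∀ vu ∈ Vu x, ∀ vc ∈ Vc x,
      vs + vu + vc = 0 → vs = 0 ∧ vu = 0 ∧ vc = 0)
    (hPbdd : ∃ M : ℝ, ∀ x ∈ K, ‖Ps x‖ + ‖Pu x‖ + ‖Pc x‖ ≤ M)
    (εc : E → E →L[ℝ] ℝ)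
    (hεc : ∀ x ∈ K, (∀ v ∈ Vs x, εc x v = 0) ∧ (∀ v ∈ Vu x, εc x v = 0) ∧ εc x (F x) = 1)
    (x₀ : E) (hx₀ : x₀ ∈ K)
    (ν : ℝ → E →L[ℝ] ℝ) (hνb : ∃ M : ℝ, ∀ t : ℝ, ‖ν t‖ ≤ M)
    (hode : ∀ t : ℝ, HasDerivAt ν (-(ν t).comp (fderiv ℝ F (φ t x₀))) t) :
    (∀ t : ℝ, (ν t).comp (Ps (φ t x₀)) = 0 ∧ (ν t).comp (Pu (φ t x₀)) = 0) ∧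
    ∃ c : ℝ, (∀ t : ℝ, ν t = c • εc (φ t x₀)) ∧ ∀ t : ℝ, ν t (F (φ t x₀)) = c :=
  bounded_homogeneous_adjoint_center_flow_general F hF φ hφ0 hφadd hφode hφC1 hφD K hφK Vs Vu Vc hVc
    C lam hlam0 hlam1 hyps hypu Ps Pu Pc hproj εc hεc x₀ hx₀ ν hνb hode
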